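/- arXiv:1701.05380 — 2 statements merged into one kernel-verified Lean document; each statement's English description precedes it below -/
import Mathlib

section
/- Let (Ω, 𝒜, P) be a probability space, (S, 𝔖) and (T, 𝔗) measurable spaces, and (X, Y) : Ω → S × T a measurable pair such that the joint law P_{(X,Y)} is absolutely continuous with respect to the product measure P_X ⊗ P_Y with Radon–Nikodým derivative g satisfying ‖g‖_{∞, P_X⊗P_Y} < ∞. Let p, q ∈ [1, ∞] be Hölder conjugate (1/p + 1/q = 1) and let h : S × T → ℝ be measurable with ‖h‖_{p, P_X⊗P_Y} = E[ E[|h(X,y)|^p]|_{y=Y} ]^{1/p} < ∞. Then |∫_{S×T} h dP_{(X,Y)} − ∫_{S×T} h d(P_X ⊗ P_Y)| ≤ 2^{1/q} (1 + ‖g‖_{∞, P_X⊗P_Y})^{1/p} ‖h‖_{p, P_X⊗P_Y} β(X,Y)^{1/q}. -/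
open MeasureTheory Real Filter Set
open scoped ENNReal NNReal

/-- β-mixing coefficient between two sub-σ-algebras. -/
noncomputable def betaMix {Ω : Type*} [MeasurableSpace Ω] (P : Measure Ω)
    (F G : MeasurableSpace Ω) : ℝ :=
  (1 / 2) * sSup { r : ℝ | ∃ (n m : ℕ) (U : Fin n → Set Ω) (V : Fin m → Set Ω),
      (∀ i, MeasurableSet[F] (U i)) ∧ (∀ j, MeasurableSet[G] (V j)) ∧
      Pairwise (Function.onFun Disjoint U) ∧ Pairwise (Function.onFun Disjoint V) ∧
      (⋃ i, U i) = Set.univ ∧ (⋃ j, V j) = Set.univ ∧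
      r = ∑ i, ∑ j, |(P (U i ∩ V j)).toReal - (P (U i)).toReal * (P (V j)).toReal| }

/-- β-mixing coefficient of two random variables. -/
noncomputable def betaRV {Ω S T : Type*} [MeasurableSpace Ω] [MeasurableSpace S]
    [MeasurableSpace T] (P : Measure Ω) (X : Ω → S) (Y : Ω → T) : ℝ :=
  betaMix P (MeasurableSpace.comap X inferInstance) (MeasurableSpace.comap Y inferInstance)

/-- β-mixing coefficients of a process indexed by ℤ. -/
noncomputable def betaProc {Ω S : Type*} [MeasurableSpace Ω] [MeasurableSpace S]
    (P : Measure Ω) (X : ℤ → Ω → S) (n : ℕ) : ℝ :=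
  ⨆ k : ℕ, betaMix P
    (⨆ s : ℤ, ⨆ _ : s ≤ (k : ℤ), MeasurableSpace.comap (X s) inferInstance)
    (⨆ s : ℤ, ⨆ _ : (k : ℤ) + (n : ℤ) ≤ s, MeasurableSpace.comap (X s) inferInstance)

/-- Stationarity of a process indexed by ℤ. -/
def Stationary {Ω S : Type*} [MeasurableSpace Ω] [MeasurableSpace S]
    (P : Measure Ω) (X : ℤ → Ω → S) : Prop :=
  Measure.map (fun ω => fun i : ℤ => X (i + 1) ω) P
    = Measure.map (fun ω => fun i : ℤ => X i ω) P

/-!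
Write `μ` for the joint law of `(X, Y)`, `ν = P_X ⊗ P_Y` and `φ = g - 1`, so that
`∫ h dμ - ∫ h dν = ∫ h φ dν`. Hölder's inequality bounds this by `‖h‖_p ‖φ‖_q`, and
`‖φ‖_q ≤ ‖φ‖_∞ ^ (1/p) ‖φ‖_1 ^ (1/q)` with `‖φ‖_∞ ≤ 1 + ‖g‖_∞`. Splitting along `E = {g > 1}`
gives `‖φ‖_1 = (μ E - ν E) + (ν Eᶜ - μ Eᶜ) = 2 (μ E - ν E)`, and `μ E - ν E ≤ β(X, Y)` for every
measurable `E ⊆ S × T`: when `E` is a union of cells `A i ×ˢ B j` of two finite measurable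
partitions, this is the definition of `β` applied to the partitions `X ⁻¹' A i` and `Y ⁻¹' B j`;
such sets form an algebra generating the product σ-algebra, hence approximate every measurable
set in `μ + ν`.
-/

open Function
open scoped symmDiff

structure IsMeasurablePartition {α ι : Type*} [MeasurableSpace α] (U : ι → Set α) : Prop where
  measurableSet : ∀ i, MeasurableSet (U i)
  pairwise_disjoint : Pairwise (Disjoint on U)
  iUnion_eq_univ : ⋃ i, U i = univ

namespace IsMeasurablePartition

variable {α β ι κ : Type*} {mα : MeasurableSpace α} {U : ι → Set α}

lemma exists_mem (hU : IsMeasurablePartition U) (x : α) : ∃ i, x ∈ U i :=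
  iUnion_eq_univ_iff.1 hU.iUnion_eq_univ x

lemma univ_unit : IsMeasurablePartition (fun _ : Unit ↦ (univ : Set α)) :=
  ⟨fun _ ↦ .univ, fun i j hij ↦ (hij (Subsingleton.elim i j)).elim, iUnion_const univ⟩

lemma cond_compl {s : Set α} (hs : MeasurableSet s) :
    IsMeasurablePartition (fun b : Bool ↦ bif b then s else sᶜ) where
  measurableSet b := by cases b <;> simp [hs, hs.compl]
  pairwise_disjoint := by
    rintro (_ | _) (_ | _) h <;> simp_all [onFun, disjoint_compl_left, disjoint_compl_right]
  iUnion_eq_univ := by simp [iUnion_eq_univ_iff, Bool.exists_bool, em']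

lemma inter {V : κ → Set α} (hU : IsMeasurablePartition U) (hV : IsMeasurablePartition V) :
    IsMeasurablePartition (fun p : ι × κ ↦ U p.1 ∩ V p.2) where
  measurableSet p := (hU.measurableSet p.1).inter (hV.measurableSet p.2)
  pairwise_disjoint := by
    rintro ⟨i, j⟩ ⟨i', j'⟩ h
    obtain hi | hj : i ≠ i' ∨ j ≠ j' := by rwa [Ne, Prod.mk.injEq, not_and_or] at h
    · exact (hU.pairwise_disjoint hi).mono inter_subset_left inter_subset_left
    · exact (hV.pairwise_disjoint hj).mono inter_subset_right inter_subset_right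
  iUnion_eq_univ := iUnion_eq_univ_iff.2 fun x ↦
    let ⟨i, hi⟩ := hU.exists_mem x
    let ⟨j, hj⟩ := hV.exists_mem x
    ⟨(i, j), hi, hj⟩

lemma prod {mβ : MeasurableSpace β} {V : κ → Set β} (hU : IsMeasurablePartition U)
    (hV : IsMeasurablePartition V) : IsMeasurablePartition (fun p : ι × κ ↦ U p.1 ×ˢ V p.2) where
  measurableSet p := (hU.measurableSet p.1).prod (hV.measurableSet p.2)
  pairwise_disjoint := by
    rintro ⟨i, j⟩ ⟨i', j'⟩ h
    obtain hi | hj : i ≠ i' ∨ j ≠ j' := by rwa [Ne, Prod.mk.injEq, not_and_or] at h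
    · exact disjoint_prod.2 (.inl (hU.pairwise_disjoint hi))
    · exact disjoint_prod.2 (.inr (hV.pairwise_disjoint hj))
  iUnion_eq_univ := by rw [iUnion_prod, hU.iUnion_eq_univ, hV.iUnion_eq_univ, univ_prod_univ]

lemma sum_measureReal_inter [Fintype ι] (hU : IsMeasurablePartition U) (μ : Measure α)
    [IsFiniteMeasure μ] {s : Set α} (hs : MeasurableSet s) :
    ∑ i, μ.real (s ∩ U i) = μ.real s := by
  rw [← measureReal_iUnion_fintype, ← inter_iUnion, hU.iUnion_eq_univ, inter_univ]
  · exact fun i j hij ↦ (hU.pairwise_disjoint hij).mono inter_subset_right inter_subset_right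
  · exact fun i ↦ hs.inter (hU.measurableSet i)

lemma sum_measureReal [Fintype ι] (hU : IsMeasurablePartition U) (μ : Measure α)
    [IsProbabilityMeasure μ] : ∑ i, μ.real (U i) = 1 := by
  simpa using hU.sum_measureReal_inter μ .univ

end IsMeasurablePartition

lemma two_mul_measureReal_sub_le_sum_abs {α ι : Type*} [Fintype ι] {mα : MeasurableSpace α}
    {μ ν : Measure α} [IsProbabilityMeasure μ] [IsProbabilityMeasure ν] {W : ι → Set α}
    (hW : IsMeasurablePartition W) {R : Set α} (hR : MeasurableSet R)
    (hRW : ∀ k, W k ⊆ R ∨ Disjoint (W k) R) :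
    2 * (μ.real R - ν.real R) ≤ ∑ k, |μ.real (W k) - ν.real (W k)| := by
  set d : Set α → ℝ := fun s ↦ μ.real s - ν.real s
  have hsum : ∀ s, MeasurableSet s → ∑ k, d (s ∩ W k) = d s := fun s hs ↦ by
    simp only [d, Finset.sum_sub_distrib, hW.sum_measureReal_inter μ hs,
      hW.sum_measureReal_inter ν hs]
  have hcompl : d Rᶜ = - d R := by
    simp only [d, probReal_compl_eq_one_sub hR]
    ring
  have hcell : ∀ k, d (R ∩ W k) - d (Rᶜ ∩ W k) ≤ |d (W k)| := fun k ↦ by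
    rcases hRW k with hsub | hdisj
    · rw [inter_eq_right.2 hsub, (disjoint_compl_left_iff_subset.2 hsub).inter_eq]
      simpa [d] using le_abs_self (d (W k))
    · rw [hdisj.symm.inter_eq, inter_eq_right.2 hdisj.subset_compl_right]
      simpa [d] using neg_le_abs (d (W k))
  calc 2 * d R = ∑ k, d (R ∩ W k) - ∑ k, d (Rᶜ ∩ W k) := by
        rw [hsum R hR, hsum Rᶜ hR.compl, hcompl]
        ring
    _ ≤ ∑ k, |d (W k)| := by
        rw [← Finset.sum_sub_distrib]
        exact Finset.sum_le_sum fun k _ ↦ hcell k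

lemma MeasureTheory.Measure.MeasureDense.measureReal_sub_le {α : Type*} {mα : MeasurableSpace α}
    {μ ν : Measure α} [IsFiniteMeasure μ] [IsFiniteMeasure ν] {𝒜 : Set (Set α)}
    (h𝒜 : (μ + ν).MeasureDense 𝒜) {c : ℝ} (hc : ∀ R ∈ 𝒜, μ.real R - ν.real R ≤ c)
    {E : Set α} (hE : MeasurableSet E) : μ.real E - ν.real E ≤ c := by
  refine le_of_forall_pos_le_add fun ε hε ↦ ?_
  obtain ⟨R, hR, hER⟩ := h𝒜.approx E hE (measure_ne_top _ _) ε hε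
  have hμ : μ.real E ≤ μ.real (E ∆ R) + μ.real R :=
    (measureReal_mono (le_symmDiff_sup_right E R)).trans (measureReal_union_le _ _)
  have hν : ν.real R ≤ ν.real (E ∆ R) + ν.real E :=
    (measureReal_mono (le_symmDiff_sup_left E R)).trans (measureReal_union_le _ _)
  have hsmall : μ.real (E ∆ R) + ν.real (E ∆ R) < ε := by
    rw [← measureReal_add_apply]
    exact ENNReal.toReal_lt_of_lt_ofReal hER
  linarith [hc R hR]

lemma eLpNorm_le_eLpNorm_top_rpow_mul_eLpNorm_one_rpow {α E : Type*} {mα : MeasurableSpace α}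
    [NormedAddCommGroup E] {μ : Measure α} {f : α → E} (hf : AEStronglyMeasurable f μ)
    (p q : ℝ≥0∞) [ENNReal.HolderConjugate p q] :
    eLpNorm f q μ ≤ eLpNorm f ∞ μ ^ p⁻¹.toReal * eLpNorm f 1 μ ^ q⁻¹.toReal := by
  rcases eq_or_ne q ∞ with rfl | hq
  · obtain rfl : p = 1 := (ENNReal.HolderConjugate.eq_top_iff_eq_one ∞ p).1 rfl
    simp
  have hq1 := ENNReal.HolderConjugate.one_le q p
  have hr : 1 ≤ q.toReal := by simpa using ENNReal.toReal_mono hq hq1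
  have hpr : p⁻¹.toReal = (q.toReal - 1) * q.toReal⁻¹ := by
    rw [← ENNReal.HolderConjugate.one_sub_inv q p,
      ENNReal.toReal_sub_of_le (ENNReal.inv_le_one.2 hq1) ENNReal.one_ne_top, ENNReal.toReal_inv,
      ENNReal.toReal_one]
    field_simp
  rw [eLpNorm_eq_lintegral_rpow_enorm_toReal (ENNReal.HolderConjugate.ne_zero q p) hq,
    eLpNorm_one_eq_lintegral_enorm, hpr, ENNReal.toReal_inv q, ENNReal.rpow_mul, one_div,
    ← ENNReal.mul_rpow_of_nonneg _ _ (by positivity)]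
  gcongr
  calc ∫⁻ x, ‖f x‖ₑ ^ q.toReal ∂μ = ∫⁻ x, ‖f x‖ₑ ^ (q.toReal - 1) * ‖f x‖ₑ ∂μ := by
        congr with x
        conv_lhs => rw [show q.toReal = (q.toReal - 1) + 1 by ring]
        rw [ENNReal.rpow_add_of_nonneg _ _ (by linarith) zero_le_one, ENNReal.rpow_one]
    _ ≤ ∫⁻ x, eLpNorm f ∞ μ ^ (q.toReal - 1) * ‖f x‖ₑ ∂μ := by
        refine lintegral_mono_ae ((enorm_ae_le_eLpNormEssSup f μ).mono fun x hx ↦ ?_)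
        rw [eLpNorm_exponent_top]
        gcongr
    _ = eLpNorm f ∞ μ ^ (q.toReal - 1) * ∫⁻ x, ‖f x‖ₑ ∂μ := lintegral_const_mul'' _ hf.enorm

lemma enorm_toReal_sub_one_le (a : ℝ≥0∞) : ‖a.toReal - 1‖ₑ ≤ (a - 1) + (1 - a) := by
  rcases eq_or_ne a ∞ with rfl | ha
  · simp
  rw [Real.enorm_eq_ofReal_abs]
  rcases le_total a 1 with h | h
  · have : a.toReal ≤ 1 := by simpa using ENNReal.toReal_mono ENNReal.one_ne_top h
    rw [abs_of_nonpos (by linarith), neg_sub, ENNReal.ofReal_sub _ ENNReal.toReal_nonneg,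
      ENNReal.ofReal_one, ENNReal.ofReal_toReal ha, tsub_eq_zero_of_le h, zero_add]
  · have : 1 ≤ a.toReal := by simpa using ENNReal.toReal_mono ha h
    rw [abs_of_nonneg (by linarith), ENNReal.ofReal_sub _ zero_le_one,
      ENNReal.ofReal_one, ENNReal.ofReal_toReal ha, tsub_eq_zero_of_le h, add_zero]

section Density

variable {α : Type*} {mα : MeasurableSpace α} {ν : Measure α} {g : α → ℝ≥0∞}

lemma eLpNorm_top_toReal_sub_one_le :
    eLpNorm (fun z ↦ (g z).toReal - 1) ∞ ν ≤ 1 + essSup g ν := by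
  rw [eLpNorm_exponent_top, eLpNormEssSup]
  refine essSup_le_of_ae_le _ ((ENNReal.ae_le_essSup g).mono fun z hz ↦ ?_)
  calc ‖(g z).toReal - 1‖ₑ ≤ ‖(g z).toReal‖ₑ + ‖(1 : ℝ)‖ₑ := enorm_sub_le
    _ ≤ g z + 1 := by
        rw [Real.enorm_eq_ofReal ENNReal.toReal_nonneg, enorm_one]
        gcongr
        exact ENNReal.ofReal_toReal_le
    _ ≤ 1 + essSup g ν := by rw [add_comm]; gcongr

lemma lintegral_tsub_one_eq [IsFiniteMeasure ν] (hg : Measurable g) :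
    ∫⁻ z, (g z - 1) ∂ν = ν.withDensity g {z | 1 < g z} - ν {z | 1 < g z} := by
  have hE : MeasurableSet {z | 1 < g z} := measurableSet_lt measurable_const hg
  rw [← setLIntegral_eq_of_support_subset (s := {z | 1 < g z})
      fun z hz ↦ tsub_pos_iff_lt.1 (pos_iff_ne_zero.2 hz),
    lintegral_sub measurable_const (by simp)
      (ae_restrict_of_forall_mem hE fun z hz ↦ le_of_lt hz),
    setLIntegral_one, withDensity_apply g hE]

lemma lintegral_one_tsub_eq [IsFiniteMeasure (ν.withDensity g)] (hg : Measurable g) :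
    ∫⁻ z, (1 - g z) ∂ν = ν {z | g z ≤ 1} - ν.withDensity g {z | g z ≤ 1} := by
  have hE : MeasurableSet {z | g z ≤ 1} := measurableSet_le hg measurable_const
  rw [← setLIntegral_eq_of_support_subset (s := {z | g z ≤ 1})
      fun z hz ↦ (tsub_pos_iff_lt.1 (pos_iff_ne_zero.2 hz)).le,
    lintegral_sub hg (by simp [← withDensity_apply g hE])
      (ae_restrict_of_forall_mem hE fun z hz ↦ hz),
    setLIntegral_one, withDensity_apply g hE]

lemma eLpNorm_one_toReal_sub_one_le [IsProbabilityMeasure ν]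
    [IsProbabilityMeasure (ν.withDensity g)] (hg : Measurable g) {c : ℝ}
    (hc : ∀ E, MeasurableSet E → (ν.withDensity g).real E - ν.real E ≤ c) :
    eLpNorm (fun z ↦ (g z).toReal - 1) 1 ν ≤ 2 * ENNReal.ofReal c := by
  set μ := ν.withDensity g
  set E := {z | 1 < g z}
  have hE : MeasurableSet E := measurableSet_lt measurable_const hg
  have hEc : {z | g z ≤ 1} = Eᶜ := by ext; simp [E]
  have sub_le_ofReal : ∀ {ρ ρ' : Measure α} [IsFiniteMeasure ρ] [IsFiniteMeasure ρ'] {s : Set α},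
      ρ.real s - ρ'.real s ≤ c → ρ s - ρ' s ≤ ENNReal.ofReal c := fun h ↦ by
    rw [← ofReal_measureReal, ← ofReal_measureReal, ← ENNReal.ofReal_sub _ measureReal_nonneg]
    exact ENNReal.ofReal_le_ofReal h
  have hcompl : ν.real Eᶜ - μ.real Eᶜ ≤ c := by
    rw [probReal_compl_eq_one_sub hE, probReal_compl_eq_one_sub hE]
    linarith [hc E hE]
  calc eLpNorm (fun z ↦ (g z).toReal - 1) 1 ν = ∫⁻ z, ‖(g z).toReal - 1‖ₑ ∂ν :=
        eLpNorm_one_eq_lintegral_enorm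
    _ ≤ ∫⁻ z, ((g z - 1) + (1 - g z)) ∂ν := lintegral_mono fun z ↦ enorm_toReal_sub_one_le _
    _ = ∫⁻ z, (g z - 1) ∂ν + ∫⁻ z, (1 - g z) ∂ν := lintegral_add_left (hg.sub measurable_const) _
    _ = (μ E - ν E) + (ν Eᶜ - μ Eᶜ) := by
        rw [lintegral_tsub_one_eq hg, lintegral_one_tsub_eq hg, hEc]
    _ ≤ ENNReal.ofReal c + ENNReal.ofReal c :=
        add_le_add (sub_le_ofReal (hc E hE)) (sub_le_ofReal hcompl)
    _ = 2 * ENNReal.ofReal c := (two_mul _).symm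

end Density

lemma integral_withDensity_sub_integral {α : Type*} {mα : MeasurableSpace α} {ν : Measure α}
    {g : α → ℝ≥0∞} (hg : Measurable g) (hgbdd : essSup g ν ≠ ∞) {h : α → ℝ}
    (hh : Integrable h ν) :
    ∫ z, h z ∂(ν.withDensity g) - ∫ z, h z ∂ν = ∫ z, h z * ((g z).toReal - 1) ∂ν := by
  have hg_le := ENNReal.ae_le_essSup g (μ := ν)
  have hgh : Integrable (fun z ↦ (g z).toReal * h z) ν :=
    hh.bdd_mul hg.ennreal_toReal.aestronglyMeasurable (c := (essSup g ν).toReal) <|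
      hg_le.mono fun z hz ↦ by
        rw [Real.norm_of_nonneg ENNReal.toReal_nonneg]
        exact ENNReal.toReal_mono hgbdd hz
  rw [integral_withDensity_eq_integral_toReal_smul hg
      (hg_le.mono fun z hz ↦ hz.trans_lt hgbdd.lt_top)]
  simp only [smul_eq_mul]
  rw [← integral_sub hgh hh]
  congr with z
  ring

section BetaMixing

variable {Ω S T ι κ : Type*} {mΩ : MeasurableSpace Ω} [MeasurableSpace S] [MeasurableSpace T]
  [Fintype ι] [Fintype κ]

lemma sum_abs_measureReal_inter_sub_mul_le_two (P : Measure Ω) [IsProbabilityMeasure P]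
    {U : ι → Set Ω} {V : κ → Set Ω} (hU : IsMeasurablePartition U) (hV : IsMeasurablePartition V) :
    ∑ i, ∑ j, |P.real (U i ∩ V j) - P.real (U i) * P.real (V j)| ≤ 2 :=
  calc ∑ i, ∑ j, |P.real (U i ∩ V j) - P.real (U i) * P.real (V j)|
      ≤ ∑ i, ∑ j, (P.real (U i ∩ V j) + P.real (U i) * P.real (V j)) := by
        gcongr with i _ j _
        refine (abs_sub _ _).trans_eq ?_
        rw [abs_of_nonneg (by positivity), abs_of_nonneg (by positivity)]
    _ = 2 := by
        simp only [Finset.sum_add_distrib, ← Finset.mul_sum,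
          hV.sum_measureReal_inter P (hU.measurableSet _), hV.sum_measureReal, mul_one,
          hU.sum_measureReal]
        norm_num

lemma sum_abs_law_sub_prod_le_two_mul_betaRV (P : Measure Ω) [IsProbabilityMeasure P]
    {X : Ω → S} {Y : Ω → T} (hX : Measurable X) (hY : Measurable Y)
    {A : ι → Set S} {B : κ → Set T} (hA : IsMeasurablePartition A) (hB : IsMeasurablePartition B) :
    ∑ i, ∑ j, |(P.map fun ω ↦ (X ω, Y ω)).real (A i ×ˢ B j)
      - ((P.map X).prod (P.map Y)).real (A i ×ˢ B j)| ≤ 2 * betaRV P X Y := by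
  have hcell : ∀ i j, (P.map fun ω ↦ (X ω, Y ω)).real (A i ×ˢ B j)
      - ((P.map X).prod (P.map Y)).real (A i ×ˢ B j)
      = P.real (X ⁻¹' A i ∩ Y ⁻¹' B j) - P.real (X ⁻¹' A i) * P.real (Y ⁻¹' B j) := fun i j ↦ by
    rw [map_measureReal_apply (hX.prodMk hY) ((hA.measurableSet i).prod (hB.measurableSet j)),
      measureReal_prod_prod, map_measureReal_apply hX (hA.measurableSet i),
      map_measureReal_apply hY (hB.measurableSet j)]
    rfl
  set e := (Fintype.equivFin ι).symm
  set e' := (Fintype.equivFin κ).symm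
  simp only [hcell, betaRV, betaMix]
  rw [← mul_assoc, mul_one_div_cancel two_ne_zero, one_mul, ← e.sum_comp]
  simp only [← e'.sum_comp (fun j ↦ |P.real (_ ∩ Y ⁻¹' B j) - _ * P.real (Y ⁻¹' B j)|)]
  refine le_csSup ⟨2, ?_⟩ ⟨_, _, fun i ↦ X ⁻¹' A (e i), fun j ↦ Y ⁻¹' B (e' j),
    fun i ↦ ⟨_, hA.measurableSet (e i), rfl⟩, fun j ↦ ⟨_, hB.measurableSet (e' j), rfl⟩,
    fun i i' h ↦ (hA.pairwise_disjoint (e.injective.ne h)).preimage X,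
    fun j j' h ↦ (hB.pairwise_disjoint (e'.injective.ne h)).preimage Y,
    by rw [← preimage_iUnion, e.surjective.iUnion_comp A, hA.iUnion_eq_univ, preimage_univ],
    by rw [← preimage_iUnion, e'.surjective.iUnion_comp B, hB.iUnion_eq_univ, preimage_univ],
    rfl⟩
  rintro r ⟨n, m, U, V, hU, hV, hUd, hVd, hUc, hVc, rfl⟩
  exact sum_abs_measureReal_inter_sub_mul_le_two P ⟨fun i ↦ hX.comap_le _ (hU i), hUd, hUc⟩
    ⟨fun j ↦ hY.comap_le _ (hV j), hVd, hVc⟩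

end BetaMixing

section GridSets

variable {Ω S T : Type*} {mΩ : MeasurableSpace Ω} [MeasurableSpace S] [MeasurableSpace T]

def gridSets (S T : Type*) [MeasurableSpace S] [MeasurableSpace T] : Set (Set (S × T)) :=
  {R | ∃ (ι κ : Type) (_ : Finite ι) (_ : Finite κ) (A : ι → Set S) (B : κ → Set T),
    IsMeasurablePartition A ∧ IsMeasurablePartition B ∧
      ∀ i j, A i ×ˢ B j ⊆ R ∨ Disjoint (A i ×ˢ B j) R}

lemma isSetAlgebra_gridSets : IsSetAlgebra (gridSets S T) where
  empty_mem := ⟨Unit, Unit, inferInstance, inferInstance, _, _, .univ_unit, .univ_unit,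
    fun _ _ ↦ .inr (disjoint_empty _)⟩
  compl_mem := by
    rintro R ⟨ι, κ, hι, hκ, A, B, hA, hB, hAB⟩
    exact ⟨ι, κ, hι, hκ, A, B, hA, hB, fun i j ↦ (hAB i j).symm.imp
      Disjoint.subset_compl_right disjoint_compl_right_iff_subset.2⟩
  union_mem := by
    rintro R R' ⟨ι, κ, hι, hκ, A, B, hA, hB, hAB⟩ ⟨ι', κ', hι', hκ', A', B', hA', hB', hAB'⟩
    refine ⟨ι × ι', κ × κ', inferInstance, inferInstance, _, _, hA.inter hA', hB.inter hB', ?_⟩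
    rintro ⟨i, i'⟩ ⟨j, j'⟩
    have h₁ : (A i ∩ A' i') ×ˢ (B j ∩ B' j') ⊆ A i ×ˢ B j :=
      prod_mono inter_subset_left inter_subset_left
    have h₂ : (A i ∩ A' i') ×ˢ (B j ∩ B' j') ⊆ A' i' ×ˢ B' j' :=
      prod_mono inter_subset_right inter_subset_right
    rcases hAB i j with h | h
    · exact .inl ((h₁.trans h).trans subset_union_left)
    rcases hAB' i' j' with h' | h'
    · exact .inl ((h₂.trans h').trans subset_union_right)
    · exact .inr (disjoint_union_right.2 ⟨h.mono_left h₁, h'.mono_left h₂⟩)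

lemma prod_mem_gridSets {s : Set S} {t : Set T} (hs : MeasurableSet s) (ht : MeasurableSet t) :
    s ×ˢ t ∈ gridSets S T := by
  refine ⟨Bool, Bool, inferInstance, inferInstance, _, _, .cond_compl hs, .cond_compl ht, ?_⟩
  rintro (_ | _) (_ | _) <;> simp [Set.disjoint_prod, disjoint_compl_left]

lemma law_sub_prod_le_betaRV_of_mem_gridSets (P : Measure Ω) [IsProbabilityMeasure P]
    {X : Ω → S} {Y : Ω → T} (hX : Measurable X) (hY : Measurable Y)
    {R : Set (S × T)} (hR : MeasurableSet R) (hRgrid : R ∈ gridSets S T) :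
    (P.map fun ω ↦ (X ω, Y ω)).real R - ((P.map X).prod (P.map Y)).real R ≤ betaRV P X Y := by
  obtain ⟨ι, κ, _, _, A, B, hA, hB, hAB⟩ := hRgrid
  have := Fintype.ofFinite ι
  have := Fintype.ofFinite κ
  have := Measure.isProbabilityMeasure_map (μ := P) hX.aemeasurable
  have := Measure.isProbabilityMeasure_map (μ := P) hY.aemeasurable
  have := Measure.isProbabilityMeasure_map (μ := P) (hX.prodMk hY).aemeasurable
  have h := two_mul_measureReal_sub_le_sum_abs (μ := P.map fun ω ↦ (X ω, Y ω))
    (ν := (P.map X).prod (P.map Y)) (hA.prod hB) hR fun p ↦ hAB p.1 p.2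
  rw [Fintype.sum_prod_type] at h
  linarith [sum_abs_law_sub_prod_le_two_mul_betaRV P hX hY hA hB]

lemma law_sub_prod_le_betaRV (P : Measure Ω) [IsProbabilityMeasure P]
    {X : Ω → S} {Y : Ω → T} (hX : Measurable X) (hY : Measurable Y)
    {E : Set (S × T)} (hE : MeasurableSet E) :
    (P.map fun ω ↦ (X ω, Y ω)).real E - ((P.map X).prod (P.map Y)).real E ≤ betaRV P X Y := by
  set 𝒜 := generateSetAlgebra (image2 (· ×ˢ ·) {s : Set S | MeasurableSet s}
    {t : Set T | MeasurableSet t})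
  have h𝒜 : ((P.map fun ω ↦ (X ω, Y ω)) + (P.map X).prod (P.map Y)).MeasureDense 𝒜 :=
    .of_generateFrom_isSetAlgebra_finite _ isSetAlgebra_generateSetAlgebra
      (by rw [generateFrom_generateSetAlgebra_eq, generateFrom_prod])
  have h𝒜grid : 𝒜 ⊆ gridSets S T := isSetAlgebra_gridSets.generateSetAlgebra_subset <| by
    rintro _ ⟨s, hs, t, ht, rfl⟩
    exact prod_mem_gridSets hs ht
  exact h𝒜.measureReal_sub_le (fun R hR ↦ law_sub_prod_le_betaRV_of_mem_gridSets P hX hY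
    (h𝒜.measurable R hR) (h𝒜grid hR)) hE

end GridSets

/-- Proposition 3.1, first part: a Davydov-type inequality for the
β-mixing coefficient of two random variables whose joint law is absolutely continuous
with respect to the product of the marginals, with essentially bounded density. -/
theorem beta_mixing_integrability
    {Ω S T : Type*} [MeasurableSpace Ω] [MeasurableSpace S] [MeasurableSpace T]
    (P : Measure Ω) [IsProbabilityMeasure P]
    (X : Ω → S) (Y : Ω → T) (hX : Measurable X) (hY : Measurable Y)
    (g : S × T → ℝ≥0∞) (hg : Measurable g)
    (hdens : Measure.map (fun ω => (X ω, Y ω)) P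
      = ((P.map X).prod (P.map Y)).withDensity g)
    (hgbdd : essSup g ((P.map X).prod (P.map Y)) ≠ ∞)
    (p q : ℝ≥0∞) (hpq : p⁻¹ + q⁻¹ = 1)
    (h : S × T → ℝ) (hh : Measurable h)
    (hhp : eLpNorm h p ((P.map X).prod (P.map Y)) ≠ ∞) :
    ENNReal.ofReal
        |∫ z, h z ∂(Measure.map (fun ω => (X ω, Y ω)) P)
          - ∫ z, h z ∂((P.map X).prod (P.map Y))|
      ≤ (2 : ℝ≥0∞) ^ (q⁻¹).toReal
          * (1 + essSup g ((P.map X).prod (P.map Y))) ^ (p⁻¹).toReal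
          * eLpNorm h p ((P.map X).prod (P.map Y))
          * ENNReal.ofReal (betaRV P X Y) ^ (q⁻¹).toReal := by
  set ν := (P.map X).prod (P.map Y)
  set φ : S × T → ℝ := fun z ↦ (g z).toReal - 1
  have := Measure.isProbabilityMeasure_map (μ := P) hX.aemeasurable
  have := Measure.isProbabilityMeasure_map (μ := P) hY.aemeasurable
  have : IsProbabilityMeasure (ν.withDensity g) :=
    hdens ▸ Measure.isProbabilityMeasure_map (hX.prodMk hY).aemeasurable
  have : ENNReal.HolderConjugate p q := ENNReal.holderConjugate_iff.2 hpq
  have hφ : AEStronglyMeasurable φ ν := (hg.ennreal_toReal.sub_const 1).aestronglyMeasurable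
  have hφ_one : eLpNorm φ 1 ν ≤ 2 * ENNReal.ofReal (betaRV P X Y) :=
    eLpNorm_one_toReal_sub_one_le hg fun E hE ↦ hdens ▸ law_sub_prod_le_betaRV P hX hY hE
  have hh_int : Integrable h ν :=
    MemLp.integrable (ENNReal.HolderConjugate.one_le p q) ⟨hh.aestronglyMeasurable, hhp.lt_top⟩
  rw [hdens, integral_withDensity_sub_integral hg hgbdd hh_int, ← Real.enorm_eq_ofReal_abs]
  calc ‖∫ z, h z * φ z ∂ν‖ₑ ≤ eLpNorm (h • φ) 1 ν :=
        (enorm_integral_le_lintegral_enorm _).trans_eq eLpNorm_one_eq_lintegral_enorm.symm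
    _ ≤ eLpNorm h p ν * eLpNorm φ q ν := eLpNorm_smul_le_mul_eLpNorm hφ hh.aestronglyMeasurable
    _ ≤ eLpNorm h p ν * (eLpNorm φ ∞ ν ^ p⁻¹.toReal * eLpNorm φ 1 ν ^ q⁻¹.toReal) := by
        gcongr
        exact eLpNorm_le_eLpNorm_top_rpow_mul_eLpNorm_one_rpow hφ p q
    _ ≤ eLpNorm h p ν * ((1 + essSup g ν) ^ p⁻¹.toReal
          * (2 * ENNReal.ofReal (betaRV P X Y)) ^ q⁻¹.toReal) := by
        gcongr
        exact eLpNorm_top_toReal_sub_one_le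
    _ = _ := by
        rw [ENNReal.mul_rpow_of_nonneg _ _ ENNReal.toReal_nonneg]
        ring
end

section
/- Let ℋ be a separable real Hilbert space, X_0 an ℋ-valued random variable, and let the kernel K : [0, ∞) → [0, ∞) be supported in [0,1], zero outside, with a continuous derivative K′ on [0,1), K′ ≤ 0 and K(1) > 0. Suppose F_x(h) := P(‖X_0 − x‖ ≤ h) > 0 for all h > 0 and all x ∈ ℋ, and that the uniform small-ball limit lim_{h↓0} sup_{x∈ℋ} |F_x(hs)/F_x(h) − τ(s)| = 0 holds for a function τ : [0,1] → [0,1]. Then there exist h₀ > 0 and a constant C > 0 such that for all 0 < h ≤ h₀ and all x ∈ ℋ: E[ ( K(‖X_0 − x‖/h) / F_x(h) )³ ] ≤ C · F_x(h)^{−2}. -/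
/-!
The kernel is nonincreasing on `[0, 1)` and vanishes beyond `1`, so it is bounded on `[0, ∞)` by
`M = max (K 0) (K 1)`. As `K (‖X₀ - x‖ / h)` also vanishes off the ball `‖X₀ - x‖ ≤ h`, its
third moment is at most `M³ F_x(h)`; dividing by `F_x(h)³` gives the claim with `C = M³` and any
`h₀`.
-/

open MeasureTheory Real Filter Set
open scoped ENNReal NNReal

/-- Small-ball probability function `F_x(h) = P(‖X₀ - x‖ ≤ h)`. -/
noncomputable def smallBall {Ω H : Type*} [MeasurableSpace Ω] [NormedAddCommGroup H]
    (P : Measure Ω) (X0 : Ω → H) (x : H) (h : ℝ) : ℝ :=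
  (P {ω | ‖X0 ω - x‖ ≤ h}).toReal

theorem antitoneOn_Ico_of_hasDerivAt_nonpos {f f' : ℝ → ℝ} {a b : ℝ}
    (hf : ∀ s ∈ Ico a b, HasDerivAt f (f' s) s) (hf' : ∀ s ∈ Ioo a b, f' s ≤ 0) :
    AntitoneOn f (Ico a b) := by
  refine antitoneOn_of_hasDerivWithinAt_nonpos (f' := f') (convex_Ico a b)
    (fun s hs => (hf s hs).continuousAt.continuousWithinAt) (fun s hs => ?_) (fun s hs => ?_)
  · rw [interior_Ico] at hs
    exact (hf s (Ioo_subset_Ico_self hs)).hasDerivWithinAt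
  · rw [interior_Ico] at hs
    exact hf' s hs

theorem le_max_of_antitoneOn_Ico_of_eq_zero {K : ℝ → ℝ} (hanti : AntitoneOn K (Ico 0 1))
    (hKsupp : ∀ u, 1 < u → K u = 0) (hK1 : 0 ≤ K 1) {u : ℝ} (hu : 0 ≤ u) :
    K u ≤ max (K 0) (K 1) := by
  rcases lt_trichotomy u 1 with h | rfl | h
  · exact (hanti ⟨le_rfl, zero_lt_one⟩ ⟨hu, h⟩ hu).trans (le_max_left _ _)
  · exact le_max_right _ _
  · exact (hKsupp u h).trans_le (hK1.trans (le_max_right _ _))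

theorem integral_kernel_pow_le_mul_smallBall {Ω H : Type*} [MeasurableSpace Ω]
    [NormedAddCommGroup H] [MeasurableSpace H] [OpensMeasurableSpace H]
    (P : Measure Ω) [IsFiniteMeasure P] {X0 : Ω → H} (hX0 : Measurable X0)
    {K : ℝ → ℝ} (hKm : Measurable K) (hK0 : ∀ u, 0 ≤ u → 0 ≤ K u)
    (hKsupp : ∀ u, 1 < u → K u = 0) {M : ℝ} (hKle : ∀ u, 0 ≤ u → K u ≤ M)
    {n : ℕ} (hn : n ≠ 0) (x : H) {δ : ℝ} (hδ : 0 < δ) :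
    ∫ ω, K (‖X0 ω - x‖ / δ) ^ n ∂P ≤ M ^ n * smallBall P X0 x δ := by
  set S : Set Ω := {ω | ‖X0 ω - x‖ ≤ δ}
  have hdist : Measurable fun ω => ‖X0 ω - x‖ :=
    (continuous_norm.comp (continuous_sub_right x)).measurable.comp hX0
  have hS : MeasurableSet S := measurableSet_le hdist measurable_const
  have hnonneg : ∀ ω, 0 ≤ K (‖X0 ω - x‖ / δ) ^ n := fun ω =>
    pow_nonneg (hK0 _ (by positivity)) n
  have hbound : ∀ ω, K (‖X0 ω - x‖ / δ) ^ n ≤ S.indicator (fun _ => M ^ n) ω := by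
    intro ω
    by_cases hω : ω ∈ S
    · have hr : 0 ≤ ‖X0 ω - x‖ / δ := by positivity
      rw [indicator_of_mem hω]
      exact pow_le_pow_left₀ (hK0 _ hr) (hKle _ hr) n
    · have h1 : 1 < ‖X0 ω - x‖ / δ := (one_lt_div hδ).2 (not_le.1 hω)
      rw [indicator_of_notMem hω, hKsupp _ h1, zero_pow hn]
  have hint : Integrable (fun ω => K (‖X0 ω - x‖ / δ) ^ n) P :=
    ((integrable_const _).indicator hS).mono'
      ((hKm.comp (hdist.div_const δ)).pow_const n).aestronglyMeasurable
      (ae_of_all _ fun ω => (norm_of_nonneg (hnonneg ω)).trans_le (hbound ω))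
  calc ∫ ω, K (‖X0 ω - x‖ / δ) ^ n ∂P
      ≤ ∫ ω, S.indicator (fun _ => M ^ n) ω ∂P :=
        integral_mono hint ((integrable_const _).indicator hS) hbound
    _ = M ^ n * smallBall P X0 x δ := by
        rw [integral_indicator_const _ hS, smul_eq_mul, mul_comm, measureReal_def]
        rfl

theorem div_pow_succ_le_mul_inv_pow {a F M : ℝ} (hF : 0 ≤ F) (ha : a ≤ M * F) {n : ℕ}
    (hn : n ≠ 0) :
    a / F ^ (n + 1) ≤ M * (F ^ n)⁻¹ := by
  rcases hF.eq_or_lt with rfl | hF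
  · simp [zero_pow hn]
  · rw [div_le_iff₀ (by positivity), pow_succ, mul_assoc, ← mul_assoc (F ^ n)⁻¹,
      inv_mul_cancel₀ (by positivity), one_mul]
    exact ha

theorem kernel_third_moment_bound_general
    {Ω H : Type*} [MeasurableSpace Ω]
    [NormedAddCommGroup H] [MeasurableSpace H] [BorelSpace H]
    (P : Measure Ω) [IsProbabilityMeasure P]
    (X0 : Ω → H) (hX0 : Measurable X0)
    (K K' : ℝ → ℝ) (hKm : Measurable K) (hK0 : ∀ u, 0 ≤ u → 0 ≤ K u)
    (hKsupp : ∀ u, 1 < u → K u = 0)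
    (hK' : ∀ s ∈ Set.Ico (0 : ℝ) 1, HasDerivAt K (K' s) s)
    (hK'neg : ∀ s ∈ Set.Ico (0 : ℝ) 1, K' s ≤ 0) (hK1 : 0 < K 1) :
    ∃ h₀ C : ℝ, 0 < h₀ ∧ 0 < C ∧
      ∀ δ : ℝ, 0 < δ → δ ≤ h₀ → ∀ x : H,
        ∫ ω, (K (‖X0 ω - x‖ / δ) / smallBall P X0 x δ) ^ 3 ∂P
          ≤ C * (smallBall P X0 x δ ^ 2)⁻¹ := by
  have hanti : AntitoneOn K (Ico 0 1) :=
    antitoneOn_Ico_of_hasDerivAt_nonpos hK' fun s hs => hK'neg s (Ioo_subset_Ico_self hs)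
  have hKle : ∀ u, 0 ≤ u → K u ≤ max (K 0) (K 1) := fun u hu =>
    le_max_of_antitoneOn_Ico_of_eq_zero hanti hKsupp hK1.le hu
  refine ⟨1, max (K 0) (K 1) ^ 3, one_pos, pow_pos (hK1.trans_le (le_max_right _ _)) 3, ?_⟩
  intro δ hδ _ x
  have hmoment := integral_kernel_pow_le_mul_smallBall P hX0 hKm hK0 hKsupp hKle
    three_ne_zero x hδ
  simp_rw [div_pow]
  rw [integral_div]
  exact div_pow_succ_le_mul_inv_pow ENNReal.toReal_nonneg hmoment two_ne_zero

/-- uniform third-moment bound for the normalized kernel: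
there are `h₀ > 0` and `C > 0` such that for all `0 < h ≤ h₀` and all `x`,
`E[(K(‖X₀ - x‖/h) / F_x(h))³] ≤ C F_x(h)⁻²`. -/
theorem kernel_third_moment_bound
    {Ω H : Type*} [MeasurableSpace Ω]
    [NormedAddCommGroup H] [InnerProductSpace ℝ H] [CompleteSpace H]
    [SecondCountableTopology H] [MeasurableSpace H] [BorelSpace H]
    (P : Measure Ω) [IsProbabilityMeasure P]
    (X0 : Ω → H) (hX0 : Measurable X0)
    (K K' : ℝ → ℝ) (hKm : Measurable K) (hK0 : ∀ u, 0 ≤ u → 0 ≤ K u)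
    (hKsupp : ∀ u, 1 < u → K u = 0)
    (hK' : ∀ s ∈ Set.Ico (0 : ℝ) 1, HasDerivAt K (K' s) s)
    (hK'cont : ContinuousOn K' (Set.Ico 0 1))
    (hK'neg : ∀ s ∈ Set.Ico (0 : ℝ) 1, K' s ≤ 0) (hK1 : 0 < K 1)
    (hFpos : ∀ (x : H) (δ : ℝ), 0 < δ → 0 < smallBall P X0 x δ)
    (τ : ℝ → ℝ) (hτ : ∀ s ∈ Set.Icc (0 : ℝ) 1, τ s ∈ Set.Icc (0 : ℝ) 1)
    (hunif : ∀ s ∈ Set.Icc (0 : ℝ) 1,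
      Tendsto (fun δ : ℝ => ⨆ x : H,
          |smallBall P X0 x (δ * s) / smallBall P X0 x δ - τ s|)
        (nhdsWithin 0 (Set.Ioi 0)) (nhds 0)) :
    ∃ h₀ C : ℝ, 0 < h₀ ∧ 0 < C ∧
      ∀ δ : ℝ, 0 < δ → δ ≤ h₀ → ∀ x : H,
        ∫ ω, (K (‖X0 ω - x‖ / δ) / smallBall P X0 x δ) ^ 3 ∂P
          ≤ C * (smallBall P X0 x δ ^ 2)⁻¹ :=
  kernel_third_moment_bound_general P X0 hX0 K K' hKm hK0 hKsupp hK' hK'neg hK1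
end
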